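/- Let g(β) = β³/6 - β²/4 + β(1/12 + 2/d) - 1/d with 0 < d ≤ 48. Then the largest zero of g in [0,1] is β = 1/2, and g(β) ≥ 0 for all β ∈ [1/2, 1]. -/
import Mathlib


/-- Remark in Section 4.3: if 0 < d ≤ 48, the largest zero of
g(β) = β³/6 - β²/4 + β(1/12 + 2/d) - 1/d in [0,1] is β = 1/2, and
g(β) ≥ 0 on [1/2, 1]. -/
theorem beta0_is_half (d : ℝ) (hd : 0 < d) (hd48 : d ≤ 48) :
    IsGreatest {β : ℝ | β ∈ Set.Icc (0 : ℝ) 1 ∧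
        β ^ 3 / 6 - β ^ 2 / 4 + β * (1 / 12 + 2 / d) - 1 / d = 0} (1 / 2) ∧
    ∀ β ∈ Set.Icc (1 / 2 : ℝ) 1,
      β ^ 3 / 6 - β ^ 2 / 4 + β * (1 / 12 + 2 / d) - 1 / d ≥ 0 := by
  have hd' := hd.ne'
  constructor
  · constructor
    · refine ⟨⟨by norm_num, by norm_num⟩, ?_⟩
      field_simp
      ring
    · rintro β ⟨⟨hβ0, hβ1⟩, hg⟩
      by_contra h
      push_neg at h
      have h1 : 2 / d * d = 2 := div_mul_cancel₀ 2 hd'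
      have h2 : 1 / d * d = 1 := div_mul_cancel₀ 1 hd'
      have heq' : d * (β ^ 3 / 6 - β ^ 2 / 4 + β / 12) + 2 * β - 1 = 0 := by
        linear_combination d * hg - β * h1 + h2
      have hpos : (β - 1/2) * (d * (β * (β - 1)) / 6 + 2) > 0 := by
        apply mul_pos (by linarith)
        nlinarith [mul_pos hd (pow_pos (sub_pos.2 h) 2)]
      nlinarith [hpos]
  · rintro β ⟨hβ0, hβ1⟩
    rw [ge_iff_le, ← sub_nonneg, sub_zero]
    have key : β ^ 3 / 6 - β ^ 2 / 4 + β * (1 / 12 + 2 / d) - 1 / d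
        = (β - 1/2) * (β * (β - 1) / 6 + 2 / d) := by
      field_simp
      ring
    rw [key]
    apply mul_nonneg (by linarith)
    have h1 : 2 / d ≥ 2 / 48 := by
      apply div_le_div_of_nonneg_left (by norm_num) hd hd48
    nlinarith [sq_nonneg (β - 1/2)]
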